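/- arXiv:1901.08195 — 8 statements merged into one kernel-verified Lean document; each statement's English description precedes it below -/
import Mathlib

section
/- Let R be a (not necessarily commutative) ring, let w be a central element of R, and let d, e, h ∈ R satisfy d² = 0, e² = 0, d·e + e·d = w, d·h + h·d = 1, and suppose (h·e)^N = 0 for some natural number N. For ℓ ≥ 0 set H_ℓ := (−1)^ℓ · Σ_{j₁+j₂=ℓ} (h·e)^{j₁} · h · (h·e)^{j₂} ∈ R (so H_ℓ = 0 for ℓ ≥ 2N). Then in the polynomial ring R[u] (with u a central variable), writing Δ := d + e·u and H := Σ_{ℓ=0}^{2N−1} H_ℓ·u^ℓ (coefficients viewed in R[u] via the canonical ring map), one has Δ·H + H·Δ = 1. -/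
/-!
Write `a = h e` and `S_ℓ = Σ_{j ≤ ℓ} a^j h a^{ℓ-j}`, so that `H_ℓ = (-1)^ℓ S_ℓ`. From
`d h + h d = 1` and the centrality of `w = d e + e d` one gets `[d, a] = e - w h`, and since
`a e = 0` this yields the recursion `{d, S_{ℓ+1}} = {e, S_ℓ}` for the anticommutator
`{x, y} = x y + y x`, together with `{d, S_0} = 1`. Comparing coefficients of `u^ℓ`, the
anticommutator of `Δ = d + e u` with `H` therefore telescopes to `1`; the last term drops out
because `S_{2N-1} = 0`, as each of its summands contains a factor `a^N`.
-/

open Finset Polynomial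

section Ring

variable {R : Type*} [Ring R]

theorem anticomm_linear_monomial (d e p : R) (ℓ : ℕ) :
    (C d + C e * X) * (C p * X ^ ℓ) + C p * X ^ ℓ * (C d + C e * X) =
      C (d * p + p * d) * X ^ ℓ + C (e * p + p * e) * X ^ (ℓ + 1) := by
  simp only [C_mul_X_pow_eq_monomial, C_mul_X_eq_monomial]
  simp only [← monomial_zero_left, add_mul, mul_add, monomial_mul_monomial, zero_add, add_zero,
    map_add, add_comm 1 ℓ]
  abel

theorem anticomm_linear_sum_eq_one (d e : R) (f : ℕ → R) (M : ℕ)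
    (h₀ : d * f 0 + f 0 * d = 1)
    (hsucc : ∀ ℓ, d * f (ℓ + 1) + f (ℓ + 1) * d = -(e * f ℓ + f ℓ * e))
    (hlast : e * f M + f M * e = 0) :
    (C d + C e * X) * (∑ ℓ ∈ range (M + 1), C (f ℓ) * X ^ ℓ) +
      (∑ ℓ ∈ range (M + 1), C (f ℓ) * X ^ ℓ) * (C d + C e * X) = 1 := by
  rw [mul_sum, sum_mul, ← sum_add_distrib]
  simp only [anticomm_linear_monomial]
  rw [sum_add_distrib, sum_range_succ', sum_range_succ _ M]
  simp only [hsucc, h₀, hlast, C_neg, neg_mul, sum_neg_distrib, map_one, map_zero, zero_mul,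
    pow_zero, mul_one, add_zero]
  abel

theorem anticomm_neg_one_pow_mul (x y : R) (ℓ : ℕ) :
    x * ((-1) ^ ℓ * y) + (-1) ^ ℓ * y * x = (-1) ^ ℓ * (x * y + y * x) := by
  rcases neg_one_pow_eq_or R ℓ with h | h <;> simp [h, add_comm]

def sandwichSum (a h : R) (ℓ : ℕ) : R :=
  ∑ j ∈ range (ℓ + 1), a ^ j * h * a ^ (ℓ - j)

theorem sandwichSum_zero (a h : R) : sandwichSum a h 0 = h := by
  simp [sandwichSum]

theorem sandwichSum_succ (a h : R) (ℓ : ℕ) :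
    sandwichSum a h (ℓ + 1) = h * a ^ (ℓ + 1) + a * sandwichSum a h ℓ := by
  rw [sandwichSum, sum_range_succ', sandwichSum, mul_sum, add_comm]
  simp only [pow_zero, one_mul, Nat.sub_zero, Nat.succ_sub_succ, pow_succ', mul_assoc]

theorem sandwichSum_eq_zero_of_pow_eq_zero {a : R} (h : R) {N ℓ : ℕ} (ha : a ^ N = 0)
    (hℓ : 2 * N ≤ ℓ + 1) : sandwichSum a h ℓ = 0 := by
  refine sum_eq_zero fun j hj => ?_
  rw [mem_range] at hj
  rcases le_or_gt N j with hNj | hjN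
  · rw [← Nat.add_sub_cancel' hNj, pow_add, ha, zero_mul, zero_mul, zero_mul]
  · rw [← Nat.add_sub_cancel' (by omega : N ≤ ℓ - j), pow_add, ha, zero_mul, mul_zero]

end Ring

section CurvedDeformation

variable {R : Type*} [Ring R] {w d e h : R}

theorem he_mul_e_eq_zero (he2 : e * e = 0) : h * e * e = 0 := by
  rw [mul_assoc, he2, mul_zero]

theorem he_pow_succ_mul_e_eq_zero (he2 : e * e = 0) (m : ℕ) : (h * e) ^ (m + 1) * e = 0 := by
  rw [pow_succ, mul_assoc, he_mul_e_eq_zero he2, mul_zero]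

theorem d_mul_he (hw : ∀ x : R, w * x = x * w) (hde : d * e + e * d = w)
    (hdh : d * h + h * d = 1) : d * (h * e) = h * e * d + (e - w * h) := by
  calc d * (h * e) = (d * h + h * d) * e - h * (d * e + e * d) + h * e * d := by noncomm_ring
    _ = h * e * d + (e - w * h) := by rw [hdh, hde, ← hw h]; noncomm_ring

theorem d_mul_he_pow_succ (hw : ∀ x : R, w * x = x * w) (he2 : e * e = 0)
    (hde : d * e + e * d = w) (hdh : d * h + h * d = 1) (m : ℕ) :
    d * (h * e) ^ (m + 1) =
      (h * e) ^ (m + 1) * d + (e * (h * e) ^ m - w * sandwichSum (h * e) h m) := by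
  induction m with
  | zero => simpa [sandwichSum_zero] using d_mul_he hw hde hdh
  | succ m ih =>
    calc d * (h * e) ^ (m + 2) = d * (h * e) * (h * e) ^ (m + 1) := by rw [mul_assoc, ← pow_succ']
      _ = (h * e * d + (e - w * h)) * (h * e) ^ (m + 1) := by rw [d_mul_he hw hde hdh]
      _ = h * e * (d * (h * e) ^ (m + 1)) + e * (h * e) ^ (m + 1) - w * h * (h * e) ^ (m + 1) := by
        noncomm_ring
      _ = h * e * ((h * e) ^ (m + 1) * d + (e * (h * e) ^ m - w * sandwichSum (h * e) h m)) +
            e * (h * e) ^ (m + 1) - w * h * (h * e) ^ (m + 1) := by rw [ih]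
      _ = (h * e) ^ (m + 2) * d + (e * (h * e) ^ (m + 1) -
            w * sandwichSum (h * e) h (m + 1)) := by
        rw [sandwichSum_succ, mul_add, mul_sub, ← mul_assoc (h * e) e, he_mul_e_eq_zero he2,
          ← mul_assoc (h * e) w, ← hw (h * e), pow_succ' _ (m + 1)]
        noncomm_ring

theorem anticomm_d_sandwichSum_succ_eq (hw : ∀ x : R, w * x = x * w) (he2 : e * e = 0)
    (hde : d * e + e * d = w) (hdh : d * h + h * d = 1) (m : ℕ) :
    d * sandwichSum (h * e) h (m + 1) + sandwichSum (h * e) h (m + 1) * d =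
      e * sandwichSum (h * e) h m +
        h * e * (d * sandwichSum (h * e) h m + sandwichSum (h * e) h m * d) := by
  set S := sandwichSum (h * e) h m
  rw [sandwichSum_succ]
  calc d * (h * (h * e) ^ (m + 1) + h * e * S) + (h * (h * e) ^ (m + 1) + h * e * S) * d
      = (d * h + h * d) * (h * e) ^ (m + 1) - h * (d * (h * e) ^ (m + 1)) +
          h * (h * e) ^ (m + 1) * d + d * (h * e) * S + h * e * S * d := by noncomm_ring
    _ = (h * e) ^ (m + 1) - h * ((h * e) ^ (m + 1) * d + (e * (h * e) ^ m - w * S)) +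
          h * (h * e) ^ (m + 1) * d + (h * e * d + (e - w * h)) * S + h * e * S * d := by
        rw [hdh, d_mul_he_pow_succ hw he2 hde hdh, d_mul_he hw hde hdh, one_mul]
    _ = e * S + h * e * (d * S + S * d) := by
        rw [hw h, pow_succ' _ m]
        noncomm_ring

theorem anticomm_d_sandwichSum_succ (hw : ∀ x : R, w * x = x * w) (he2 : e * e = 0)
    (hde : d * e + e * d = w) (hdh : d * h + h * d = 1) (m : ℕ) :
    d * sandwichSum (h * e) h (m + 1) + sandwichSum (h * e) h (m + 1) * d =
      e * sandwichSum (h * e) h m + sandwichSum (h * e) h m * e := by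
  induction m with
  | zero =>
    rw [anticomm_d_sandwichSum_succ_eq hw he2 hde hdh, sandwichSum_zero, hdh, mul_one, add_comm]
  | succ m ih =>
    have hSe : sandwichSum (h * e) h (m + 1) * e = h * e * (sandwichSum (h * e) h m * e) := by
      rw [sandwichSum_succ, add_mul, mul_assoc h, he_pow_succ_mul_e_eq_zero he2, mul_zero, zero_add,
        mul_assoc]
    rw [anticomm_d_sandwichSum_succ_eq hw he2 hde hdh, ih, mul_add, ← mul_assoc (h * e) e,
      he_mul_e_eq_zero he2, zero_mul, zero_add, hSe]

end CurvedDeformation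

theorem curved_deformation_contractible_ring_general
    {R : Type*} [Ring R] (w d e h : R) (N : ℕ)
    (hw : ∀ x : R, w * x = x * w)
    (he2 : e * e = 0)
    (hde : d * e + e * d = w)
    (hdh : d * h + h * d = 1)
    (hN : (h * e) ^ N = 0) :
    (C d + C e * X) *
        (∑ ℓ ∈ Finset.range (2 * N),
          C ((-1 : R) ^ ℓ *
            ∑ j ∈ Finset.range (ℓ + 1), (h * e) ^ j * h * (h * e) ^ (ℓ - j)) * X ^ ℓ) +
      (∑ ℓ ∈ Finset.range (2 * N),
          C ((-1 : R) ^ ℓ *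
            ∑ j ∈ Finset.range (ℓ + 1), (h * e) ^ j * h * (h * e) ^ (ℓ - j)) * X ^ ℓ) *
        (C d + C e * X) = 1 := by
  rcases N.eq_zero_or_pos with rfl | hNpos
  · have : Subsingleton R := subsingleton_of_zero_eq_one (by simpa using hN.symm)
    exact Subsingleton.elim _ _
  obtain ⟨M, hM⟩ : ∃ M, 2 * N = M + 1 := ⟨2 * N - 1, by omega⟩
  rw [hM]
  refine anticomm_linear_sum_eq_one d e (fun ℓ => (-1) ^ ℓ * sandwichSum (h * e) h ℓ) M ?_ ?_ ?_
  · simpa [sandwichSum_zero] using hdh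
  · intro ℓ
    rw [anticomm_neg_one_pow_mul, anticomm_neg_one_pow_mul,
      anticomm_d_sandwichSum_succ hw he2 hde hdh, pow_succ, mul_neg_one, neg_mul]
  · simp [sandwichSum_eq_zero_of_pow_eq_zero h hN hM.le]

/-- If `d` is a differential with contracting homotopy `h` (`d*h + h*d = 1`),
`e` is a curved deformation term (`e² = 0`, `d*e + e*d = w` with `w` central) and
`(h*e)^N = 0`, then in `R[u]` the element `Δ = d + e·u` has the two-sided homotopy
inverse `H = Σ_{ℓ<2N} H_ℓ u^ℓ` with
`H_ℓ = (−1)^ℓ Σ_{j₁+j₂=ℓ} (he)^{j₁} h (he)^{j₂}`, i.e. `Δ*H + H*Δ = 1`. -/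
theorem curved_deformation_contractible_ring
    {R : Type*} [Ring R] (w d e h : R) (N : ℕ)
    (hw : ∀ x : R, w * x = x * w)
    (hd2 : d * d = 0) (he2 : e * e = 0)
    (hde : d * e + e * d = w)
    (hdh : d * h + h * d = 1)
    (hN : (h * e) ^ N = 0) :
    (C d + C e * X) *
        (∑ ℓ ∈ Finset.range (2 * N),
          C ((-1 : R) ^ ℓ *
            ∑ j ∈ Finset.range (ℓ + 1), (h * e) ^ j * h * (h * e) ^ (ℓ - j)) * X ^ ℓ) +
      (∑ ℓ ∈ Finset.range (2 * N),
          C ((-1 : R) ^ ℓ *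
            ∑ j ∈ Finset.range (ℓ + 1), (h * e) ^ j * h * (h * e) ^ (ℓ - j)) * X ^ ℓ) *
        (C d + C e * X) = 1 :=
  curved_deformation_contractible_ring_general w d e h N hw he2 hde hdh hN
end

section
/- Let S be a commutative ring and w ∈ S. Let (V_i)_{i∈ℤ} be a family of S-modules with V_i = 0 for all but finitely many i, equipped with S-linear maps d : V_i → V_{i+1} and e, h : V_i → V_{i−1} satisfying, on each V_i: d∘d = 0, e∘e = 0, d∘e + e∘d = w·id, and d∘h + h∘d = id (so (V, d) is a contractible bounded complex and the pair (d, e) is a curved deformation with scalar curvature w). Then there exists a family of S-linear maps H_ℓ : V_i → V_{i−1−2ℓ} for ℓ ≥ 0, with H_ℓ = 0 for all but finitely many ℓ, such that d∘H₀ + H₀∘d = id on each V_i and d∘H_ℓ + H_ℓ∘d + e∘H_{ℓ−1} + H_{ℓ−1}∘e = 0 for every ℓ ≥ 1. Equivalently, the curved complex (V, d + u·e), whose square of the connection is u·w·id, is contractible. -/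
/-- If `(V, d)` is a bounded contractible complex (contracting homotopy `h`) and `e` is a
curved deformation term of degree `-1` with scalar curvature `w` (`e² = 0`,
`de + ed = w·id`), then the curved complex `(V, d + u·e)` is contractible: there are maps
`H_ℓ` of degree `-(1+2ℓ)`, almost all zero, with `dH₀ + H₀d = id` and
`dH_ℓ + H_ℓd + eH_{ℓ−1} + H_{ℓ−1}e = 0` for `ℓ ≥ 1`. -/
theorem curved_deformation_of_contractible_complex_contractible
    {S : Type*} [CommRing S] (w : S)
    {M : Type*} [AddCommGroup M] [Module S M]
    (V : ℤ → Submodule S M) (hV : DirectSum.IsInternal V)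
    (hVfin : {i : ℤ | V i ≠ ⊥}.Finite)
    (d e h : M →ₗ[S] M)
    (hdV : ∀ i : ℤ, ∀ x ∈ V i, d x ∈ V (i + 1))
    (heV : ∀ i : ℤ, ∀ x ∈ V i, e x ∈ V (i - 1))
    (hhV : ∀ i : ℤ, ∀ x ∈ V i, h x ∈ V (i - 1))
    (hd2 : d ∘ₗ d = 0) (he2 : e ∘ₗ e = 0)
    (hde : d ∘ₗ e + e ∘ₗ d = w • LinearMap.id)
    (hdh : d ∘ₗ h + h ∘ₗ d = LinearMap.id) :
    ∃ H : ℕ → (M →ₗ[S] M),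
      (∀ (ℓ : ℕ) (i : ℤ), ∀ x ∈ V i, H ℓ x ∈ V (i - 1 - 2 * (ℓ : ℤ))) ∧
      {ℓ : ℕ | H ℓ ≠ 0}.Finite ∧
      d ∘ₗ H 0 + H 0 ∘ₗ d = LinearMap.id ∧
      (∀ ℓ : ℕ, 1 ≤ ℓ →
        d ∘ₗ H ℓ + H ℓ ∘ₗ d + e ∘ₗ H (ℓ - 1) + H (ℓ - 1) ∘ₗ e = 0) := by
  classical
  -- The recursively defined homotopies.
  let H : ℕ → Module.End S M := fun ℓ => Nat.rec h (fun _ Hp => -(h * (e * Hp + Hp * e))) ℓ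
  let C : ℕ → Module.End S M := fun ℓ => Nat.rec 1 (fun k _ => -(e * H k + H k * e)) ℓ
  have hH0 : H 0 = h := rfl
  have hHs : ∀ ℓ, H (ℓ + 1) = -(h * (e * H ℓ + H ℓ * e)) := fun ℓ => rfl
  have hC0 : C 0 = 1 := rfl
  have hCs : ∀ ℓ, C (ℓ + 1) = -(e * H ℓ + H ℓ * e) := fun ℓ => rfl
  -- hypotheses in ring form
  have hdh' : d * h + h * d = 1 := by
    simpa [Module.End.mul_eq_comp, Module.End.one_eq_id] using hdh
  have he2' : e * e = 0 := by simpa [Module.End.mul_eq_comp] using he2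
  set W : Module.End S M := algebraMap S (Module.End S M) w with hWdef
  have hW : ∀ f : Module.End S M, W * f = f * W := fun f => Algebra.commutes w f
  have hde' : d * e + e * d = W := by
    rw [hWdef, Module.algebraMap_end_eq_smul_id]
    simpa [Module.End.mul_eq_comp] using hde
  have hde1 : d * e = W - e * d := by rw [eq_sub_iff_add_eq]; exact hde'
  -- main algebraic identities
  have key : ∀ ℓ : ℕ, (d * H ℓ + H ℓ * d = C ℓ) ∧ (e * C ℓ = C ℓ * e) := by
    intro ℓ
    induction ℓ with
    | zero => exact ⟨by rw [hH0, hC0]; exact hdh', by rw [hC0, mul_one, one_mul]⟩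
    | succ ℓ ih =>
      obtain ⟨ih1, ih2⟩ := ih
      have hdc : d * H ℓ = C ℓ - H ℓ * d := by rw [eq_sub_iff_add_eq]; exact ih1
      have hcomm : d * (e * H ℓ + H ℓ * e) = (e * H ℓ + H ℓ * e) * d := by
        calc d * (e * H ℓ + H ℓ * e)
            = (d * e) * H ℓ + (d * H ℓ) * e := by noncomm_ring
          _ = (W - e * d) * H ℓ + (C ℓ - H ℓ * d) * e := by rw [hde1, hdc]
          _ = W * H ℓ - e * (d * H ℓ) + C ℓ * e - H ℓ * (d * e) := by noncomm_ring
          _ = W * H ℓ - e * (C ℓ - H ℓ * d) + C ℓ * e - H ℓ * (W - e * d) := by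
              rw [hdc, hde1]
          _ = (W * H ℓ - H ℓ * W) + (C ℓ * e - e * C ℓ) + (e * H ℓ + H ℓ * e) * d := by
              noncomm_ring
          _ = (e * H ℓ + H ℓ * e) * d := by rw [hW, ih2]; noncomm_ring
      constructor
      · rw [hHs, hCs]
        calc d * -(h * (e * H ℓ + H ℓ * e)) + -(h * (e * H ℓ + H ℓ * e)) * d
            = -((d * h) * (e * H ℓ + H ℓ * e) + h * ((e * H ℓ + H ℓ * e) * d)) := by
              noncomm_ring
          _ = -((d * h) * (e * H ℓ + H ℓ * e) + h * (d * (e * H ℓ + H ℓ * e))) := by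
              rw [hcomm]
          _ = -((d * h + h * d) * (e * H ℓ + H ℓ * e)) := by noncomm_ring
          _ = -(e * H ℓ + H ℓ * e) := by rw [hdh', one_mul]
      · rw [hCs]
        have h1 : e * (e * H ℓ + H ℓ * e) = (e * H ℓ + H ℓ * e) * e := by
          calc e * (e * H ℓ + H ℓ * e) = (e * e) * H ℓ + e * H ℓ * e := by noncomm_ring
            _ = e * H ℓ * e + H ℓ * (e * e) := by rw [he2']; noncomm_ring
            _ = (e * H ℓ + H ℓ * e) * e := by noncomm_ring
        rw [mul_neg, neg_mul, h1]
  -- degree bookkeeping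
  have hmem : ∀ (ℓ : ℕ) (i : ℤ), ∀ x ∈ V i, H ℓ x ∈ V (i - 1 - 2 * (ℓ : ℤ)) := by
    intro ℓ
    induction ℓ with
    | zero =>
      intro i x hx
      have := hhV i x hx
      rw [hH0]
      convert this using 2
      push_cast; ring
    | succ ℓ ih =>
      intro i x hx
      have h1 : H ℓ (e x) ∈ V (i - 1 - 1 - 2 * (ℓ : ℤ)) := ih _ _ (heV i x hx)
      have h2 : e (H ℓ x) ∈ V (i - 1 - 2 * (ℓ : ℤ) - 1) := heV _ _ (ih i x hx)
      rw [show i - 1 - 1 - 2 * (ℓ : ℤ) = i - 2 - 2 * (ℓ : ℤ) by ring] at h1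
      rw [show i - 1 - 2 * (ℓ : ℤ) - 1 = i - 2 - 2 * (ℓ : ℤ) by ring] at h2
      have h3 : e (H ℓ x) + H ℓ (e x) ∈ V (i - 2 - 2 * (ℓ : ℤ)) := add_mem h2 h1
      have h4 : h (e (H ℓ x) + H ℓ (e x)) ∈ V (i - 2 - 2 * (ℓ : ℤ) - 1) := hhV _ _ h3
      have h5 : H (ℓ + 1) x = -(h (e (H ℓ x) + H ℓ (e x))) := by
        rw [hHs]; simp [Module.End.mul_eq_comp]
      rw [h5]
      have := neg_mem h4
      convert this using 2
      push_cast; ring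
  -- vanishing for large ℓ
  have hvanish : ∀ ℓ : ℕ, (∀ i : ℤ, V i ≠ ⊥ → V (i - 1 - 2 * (ℓ : ℤ)) = ⊥) → H ℓ = 0 := by
    intro ℓ hℓ
    ext x
    have hx : x ∈ ⨆ i, V i := by rw [hV.submodule_iSup_eq_top]; trivial
    rw [LinearMap.zero_apply]
    refine Submodule.iSup_induction (motive := fun y => H ℓ y = 0) V hx ?_ (map_zero _) ?_
    · intro i y hy
      by_cases hVi : V i = ⊥
      · rw [hVi, Submodule.mem_bot] at hy
        rw [hy, map_zero]
      · have := hmem ℓ i y hy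
        rw [hℓ i hVi, Submodule.mem_bot] at this
        exact this
    · intro a b ha hb
      rw [map_add, ha, hb, add_zero]
  have hfin : {ℓ : ℕ | H ℓ ≠ 0}.Finite := by
    rcases Set.eq_empty_or_nonempty {i : ℤ | V i ≠ ⊥} with hT | hT
    · have : ∀ ℓ, H ℓ = 0 := by
        intro ℓ
        refine hvanish ℓ fun i hi => ?_
        exact absurd (Set.eq_empty_iff_forall_notMem.mp hT i) (by simpa using hi)
      simp [this, Set.eq_empty_iff_forall_notMem]
    · have hFne : hVfin.toFinset.Nonempty := by
        obtain ⟨i, hi⟩ := hT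
        exact ⟨i, hVfin.mem_toFinset.mpr hi⟩
      set a := hVfin.toFinset.min' hFne with ha
      set b := hVfin.toFinset.max' hFne with hb
      refine Set.Finite.subset (Set.finite_Iio ((b - a).toNat + 1)) ?_
      intro ℓ hℓ
      by_contra hge
      simp only [Set.mem_Iio, not_lt] at hge
      apply hℓ
      refine hvanish ℓ fun i hi => ?_
      by_contra hne
      have hib : i ≤ b := hVfin.toFinset.le_max' i (hVfin.mem_toFinset.mpr hi)
      have hia : a ≤ i - 1 - 2 * (ℓ : ℤ) :=
        hVfin.toFinset.min'_le _ (hVfin.mem_toFinset.mpr hne)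
      have h2ℓ : ((b - a).toNat + 1 : ℕ) ≤ ℓ := hge
      omega
  refine ⟨H, hmem, hfin, ?_, ?_⟩
  · have := (key 0).1
    rw [hC0] at this
    simpa [Module.End.mul_eq_comp, Module.End.one_eq_id] using this
  · intro ℓ hℓ
    obtain ⟨k, rfl⟩ := Nat.exists_eq_add_of_le hℓ
    have h1 := (key (k + 1)).1
    rw [hCs] at h1
    have h2 : d * H (k + 1) + H (k + 1) * d + e * H k + H k * e = 0 := by
      rw [h1]; abel
    rw [show 1 + k - 1 = k from by omega, show 1 + k = k + 1 from by ring]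
    simpa [Module.End.mul_eq_comp] using h2
end

section
/- Let S be a commutative ring and w ∈ S. Let (C_i)_{i∈ℤ} and (C'_i)_{i∈ℤ} be families of S-modules equipped with S-linear maps d : C_i → C_{i+1}, e : C_i → C_{i−1}, d' : C'_i → C'_{i+1}, e' : C'_i → C'_{i−1} satisfying on each graded piece: d∘d = 0, e∘e = 0, d∘e + e∘d = w·id, and likewise d'∘d' = 0, e'∘e' = 0, d'∘e' + e'∘d' = w·id. Assume the following null-homotopy hypothesis: for every k ≥ 1, every degree (1−2k) map θ (a family θ : C_i → C'_{i+1−2k}) satisfying d'∘θ + θ∘d = 0 can be written as θ = d'∘h − h∘d for some degree (−2k) map h : C_i → C'_{i−2k}. Then every degree-0 chain map φ₀ : C → C' (i.e. d'∘φ₀ = φ₀∘d) extends to a morphism of the curved deformations: there exist degree (−2m) maps φ_m : C_i → C'_{i−2m} for all m ≥ 1 such that d'∘φ_m − φ_m∘d + e'∘φ_{m−1} − φ_{m−1}∘e = 0 for every m ≥ 1 (equivalently, φ = Σ_{m≥0} φ_m u^m satisfies (d' + u e')∘φ = φ∘(d + u e)). -/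
/-!
Write `D g = d' g - g d` and `E g = g e - e' g`. The required identities say `D φₘ₊₁ = E φₘ`,
so by the null-homotopy hypothesis `φₘ₊₁` exists as soon as `E φₘ` is a cycle, i.e.
`d' (E φₘ) + (E φₘ) d = 0`. The relations `d e + e d = w = d' e' + e' d'` give
`d' (E g) + (E g) d = e' (D g) + (D g) e`, and `e² = 0 = e'²` make the right-hand side vanish
when `D g = E f` for some `f`. So the cycle condition passes from each component to the next.
-/

theorem exists_seq_of_forall_exists_succ {α : Type*} {P : ℕ → α → Prop} {R : ℕ → α → α → Prop}
    {a : α} (h0 : P 0 a) (hstep : ∀ n x, P n x → ∃ y, P (n + 1) y ∧ R n x y) :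
    ∃ f : ℕ → α, f 0 = a ∧ ∀ n, P n (f n) ∧ R n (f n) (f (n + 1)) := by
  choose! next hnext using hstep
  let f : ℕ → α := fun n => Nat.rec a next n
  have hP : ∀ n, P n (f n) := fun n => by
    induction n with
    | zero => exact h0
    | succ n ih => exact (hnext n (f n) ih).1
  exact ⟨f, rfl, fun n => ⟨hP n, (hnext n (f n) (hP n)).2⟩⟩

section GradedMaps

variable {S : Type*} [CommRing S] {M₁ M₂ M₃ : Type*} [AddCommGroup M₁] [Module S M₁]
  [AddCommGroup M₂] [Module S M₂] [AddCommGroup M₃] [Module S M₃]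

def HasDegree (C₁ : ℤ → Submodule S M₁) (C₂ : ℤ → Submodule S M₂) (n : ℤ)
    (f : M₁ →ₗ[S] M₂) : Prop :=
  ∀ i, ∀ x ∈ C₁ i, f x ∈ C₂ (i + n)

variable {C₁ : ℤ → Submodule S M₁} {C₂ : ℤ → Submodule S M₂} {C₃ : ℤ → Submodule S M₃}

theorem HasDegree.sub {n : ℤ} {f g : M₁ →ₗ[S] M₂} (hf : HasDegree C₁ C₂ n f)
    (hg : HasDegree C₁ C₂ n g) : HasDegree C₁ C₂ n (f - g) :=
  fun i x hx => sub_mem (hf i x hx) (hg i x hx)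

theorem HasDegree.comp {n k : ℤ} {g : M₂ →ₗ[S] M₃} {f : M₁ →ₗ[S] M₂}
    (hg : HasDegree C₂ C₃ n g) (hf : HasDegree C₁ C₂ k f) : HasDegree C₁ C₃ (k + n) (g ∘ₗ f) :=
  fun i x hx => by rw [← add_assoc]; exact hg _ _ (hf i x hx)

theorem HasDegree.of_eq {n k : ℤ} {f : M₁ →ₗ[S] M₂} (hf : HasDegree C₁ C₂ n f) (h : n = k) :
    HasDegree C₁ C₂ k f :=
  h ▸ hf

end GradedMaps

section CurvedDeformation

variable {S : Type*} [CommRing S] {M M' : Type*} [AddCommGroup M] [Module S M]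
  [AddCommGroup M'] [Module S M'] {w : S} {d e : M →ₗ[S] M} {d' e' : M' →ₗ[S] M'}

theorem anticomm_comp_sub_comp_eq_zero_of_sq_eq_zero (he2 : e ∘ₗ e = 0)
    (he2' : e' ∘ₗ e' = 0) (f : M →ₗ[S] M') :
    e' ∘ₗ (f ∘ₗ e - e' ∘ₗ f) + (f ∘ₗ e - e' ∘ₗ f) ∘ₗ e = 0 := by
  ext x
  have h1 : e (e x) = 0 := LinearMap.congr_fun he2 x
  have h2 : e' (e' (f x)) = 0 := LinearMap.congr_fun he2' (f x)
  simp only [LinearMap.add_apply, LinearMap.comp_apply, LinearMap.sub_apply, map_sub, h1, h2,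
    map_zero, LinearMap.zero_apply]
  abel

theorem anticomm_comp_sub_comp_eq_zero_of_anticomm_eq_smul
    (hde : d ∘ₗ e + e ∘ₗ d = w • LinearMap.id)
    (hde' : d' ∘ₗ e' + e' ∘ₗ d' = w • LinearMap.id) {g : M →ₗ[S] M'}
    (hg : e' ∘ₗ (d' ∘ₗ g - g ∘ₗ d) + (d' ∘ₗ g - g ∘ₗ d) ∘ₗ e = 0) :
    d' ∘ₗ (g ∘ₗ e - e' ∘ₗ g) + (g ∘ₗ e - e' ∘ₗ g) ∘ₗ d = 0 := by
  ext x
  have hx : e' (d' (g x)) - e' (g (d x)) + (d' (g (e x)) - g (d (e x))) = 0 := by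
    simpa using LinearMap.congr_fun hg x
  have hw : g (d (e x)) + g (e (d x)) = w • g x := by
    simpa using congrArg g (LinearMap.congr_fun hde x)
  have hw' : d' (e' (g x)) + e' (d' (g x)) = w • g x := by
    simpa using LinearMap.congr_fun hde' (g x)
  simp only [LinearMap.add_apply, LinearMap.comp_apply, LinearMap.sub_apply, map_sub,
    LinearMap.zero_apply]
  linear_combination (norm := module) hx + hw - hw'

variable {C : ℤ → Submodule S M} {C' : ℤ → Submodule S M'}

theorem exists_next_curved_component (he : HasDegree C C (-1) e) (he' : HasDegree C' C' (-1) e')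
    (he2 : e ∘ₗ e = 0) (he2' : e' ∘ₗ e' = 0) (hde : d ∘ₗ e + e ∘ₗ d = w • LinearMap.id)
    (hde' : d' ∘ₗ e' + e' ∘ₗ d' = w • LinearMap.id)
    (hnull : ∀ k : ℕ, 1 ≤ k → ∀ θ : M →ₗ[S] M', HasDegree C C' (1 - 2 * k) θ →
      d' ∘ₗ θ + θ ∘ₗ d = 0 → ∃ h : M →ₗ[S] M', HasDegree C C' (-(2 * k)) h ∧ θ = d' ∘ₗ h - h ∘ₗ d)
    {m : ℕ} {g : M →ₗ[S] M'} (hg : HasDegree C C' (-(2 * m)) g)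
    (hcycle : e' ∘ₗ (d' ∘ₗ g - g ∘ₗ d) + (d' ∘ₗ g - g ∘ₗ d) ∘ₗ e = 0) :
    ∃ h : M →ₗ[S] M', (HasDegree C C' (-(2 * (m + 1 : ℕ))) h ∧
        e' ∘ₗ (d' ∘ₗ h - h ∘ₗ d) + (d' ∘ₗ h - h ∘ₗ d) ∘ₗ e = 0) ∧
      d' ∘ₗ h - h ∘ₗ d + e' ∘ₗ g - g ∘ₗ e = 0 := by
  have hθ : HasDegree C C' (1 - 2 * (m + 1 : ℕ)) (g ∘ₗ e - e' ∘ₗ g) :=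
    ((hg.comp he).of_eq (by push_cast; ring)).sub ((he'.comp hg).of_eq (by push_cast; ring))
  obtain ⟨h, hh, hθh⟩ := hnull (m + 1) m.succ_pos _ hθ
    (anticomm_comp_sub_comp_eq_zero_of_anticomm_eq_smul hde hde' hcycle)
  refine ⟨h, ⟨hh, hθh ▸ anticomm_comp_sub_comp_eq_zero_of_sq_eq_zero he2 he2' g⟩, ?_⟩
  rw [← hθh]
  abel

end CurvedDeformation

theorem chain_map_extends_to_curved_deformations_general
    {S : Type*} [CommRing S] (w : S)
    {M M' : Type*} [AddCommGroup M] [Module S M] [AddCommGroup M'] [Module S M']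
    (C : ℤ → Submodule S M) (C' : ℤ → Submodule S M')
    (d e : M →ₗ[S] M) (d' e' : M' →ₗ[S] M')
    (heC : ∀ i : ℤ, ∀ x ∈ C i, e x ∈ C (i - 1))
    (heC' : ∀ i : ℤ, ∀ x ∈ C' i, e' x ∈ C' (i - 1))
    (he2 : e ∘ₗ e = 0)
    (hde : d ∘ₗ e + e ∘ₗ d = w • LinearMap.id)
    (he2' : e' ∘ₗ e' = 0)
    (hde' : d' ∘ₗ e' + e' ∘ₗ d' = w • LinearMap.id)
    (hnull : ∀ k : ℕ, 1 ≤ k → ∀ θ : M →ₗ[S] M',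
      (∀ i : ℤ, ∀ x ∈ C i, θ x ∈ C' (i + 1 - 2 * (k : ℤ))) →
      d' ∘ₗ θ + θ ∘ₗ d = 0 →
      ∃ h : M →ₗ[S] M',
        (∀ i : ℤ, ∀ x ∈ C i, h x ∈ C' (i - 2 * (k : ℤ))) ∧ θ = d' ∘ₗ h - h ∘ₗ d)
    (φ₀ : M →ₗ[S] M')
    (hφ₀deg : ∀ i : ℤ, ∀ x ∈ C i, φ₀ x ∈ C' i)
    (hφ₀ : d' ∘ₗ φ₀ = φ₀ ∘ₗ d) :
    ∃ φ : ℕ → (M →ₗ[S] M'),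
      φ 0 = φ₀ ∧
      (∀ (m : ℕ) (i : ℤ), ∀ x ∈ C i, φ m x ∈ C' (i - 2 * (m : ℤ))) ∧
      (∀ m : ℕ, 1 ≤ m →
        d' ∘ₗ φ m - φ m ∘ₗ d + e' ∘ₗ φ (m - 1) - φ (m - 1) ∘ₗ e = 0) := by
  have he : HasDegree C C (-1) e := fun i x hx => by
    simpa only [← sub_eq_add_neg] using heC i x hx
  have he' : HasDegree C' C' (-1) e' := fun i x hx => by
    simpa only [← sub_eq_add_neg] using heC' i x hx
  have hnull' : ∀ k : ℕ, 1 ≤ k → ∀ θ : M →ₗ[S] M', HasDegree C C' (1 - 2 * k) θ →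
      d' ∘ₗ θ + θ ∘ₗ d = 0 →
      ∃ h : M →ₗ[S] M', HasDegree C C' (-(2 * k)) h ∧ θ = d' ∘ₗ h - h ∘ₗ d := by
    intro k hk θ hθ hcycle
    obtain ⟨h, hh, hθh⟩ := hnull k hk θ
      (fun i x hx => by simpa only [add_sub_assoc] using hθ i x hx) hcycle
    exact ⟨h, fun i x hx => by simpa only [← sub_eq_add_neg] using hh i x hx, hθh⟩
  obtain ⟨φ, hφ0, hφ⟩ := exists_seq_of_forall_exists_succ
    (P := fun m g => HasDegree C C' (-(2 * m)) g ∧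
      e' ∘ₗ (d' ∘ₗ g - g ∘ₗ d) + (d' ∘ₗ g - g ∘ₗ d) ∘ₗ e = 0)
    ⟨fun i x hx => by simpa using hφ₀deg i x hx, by simp [hφ₀]⟩
    fun _ _ hg => exists_next_curved_component he he' he2 he2' hde hde' hnull' hg.1 hg.2
  refine ⟨φ, hφ0, fun m i x hx => by simpa only [sub_eq_add_neg] using (hφ m).1.1 i x hx,
    fun m hm => ?_⟩
  obtain ⟨n, rfl⟩ := Nat.exists_eq_add_of_le' hm
  exact (hφ n).2

/-- The inductive construction extending a degree-zero chain map `φ₀` between complexes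
to a morphism of curved deformations, under the hypothesis that every odd-degree chain map
between the two complexes is null-homotopic. -/
theorem chain_map_extends_to_curved_deformations
    {S : Type*} [CommRing S] (w : S)
    {M M' : Type*} [AddCommGroup M] [Module S M] [AddCommGroup M'] [Module S M']
    (C : ℤ → Submodule S M) (C' : ℤ → Submodule S M')
    (hC : DirectSum.IsInternal C) (hC' : DirectSum.IsInternal C')
    (d e : M →ₗ[S] M) (d' e' : M' →ₗ[S] M')
    (hdC : ∀ i : ℤ, ∀ x ∈ C i, d x ∈ C (i + 1))
    (heC : ∀ i : ℤ, ∀ x ∈ C i, e x ∈ C (i - 1))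
    (hdC' : ∀ i : ℤ, ∀ x ∈ C' i, d' x ∈ C' (i + 1))
    (heC' : ∀ i : ℤ, ∀ x ∈ C' i, e' x ∈ C' (i - 1))
    (hd2 : d ∘ₗ d = 0) (he2 : e ∘ₗ e = 0)
    (hde : d ∘ₗ e + e ∘ₗ d = w • LinearMap.id)
    (hd2' : d' ∘ₗ d' = 0) (he2' : e' ∘ₗ e' = 0)
    (hde' : d' ∘ₗ e' + e' ∘ₗ d' = w • LinearMap.id)
    (hnull : ∀ k : ℕ, 1 ≤ k → ∀ θ : M →ₗ[S] M',
      (∀ i : ℤ, ∀ x ∈ C i, θ x ∈ C' (i + 1 - 2 * (k : ℤ))) →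
      d' ∘ₗ θ + θ ∘ₗ d = 0 →
      ∃ h : M →ₗ[S] M',
        (∀ i : ℤ, ∀ x ∈ C i, h x ∈ C' (i - 2 * (k : ℤ))) ∧ θ = d' ∘ₗ h - h ∘ₗ d)
    (φ₀ : M →ₗ[S] M')
    (hφ₀deg : ∀ i : ℤ, ∀ x ∈ C i, φ₀ x ∈ C' i)
    (hφ₀ : d' ∘ₗ φ₀ = φ₀ ∘ₗ d) :
    ∃ φ : ℕ → (M →ₗ[S] M'),
      φ 0 = φ₀ ∧
      (∀ (m : ℕ) (i : ℤ), ∀ x ∈ C i, φ m x ∈ C' (i - 2 * (m : ℤ))) ∧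
      (∀ m : ℕ, 1 ≤ m →
        d' ∘ₗ φ m - φ m ∘ₗ d + e' ∘ₗ φ (m - 1) - φ (m - 1) ∘ₗ e = 0) :=
  chain_map_extends_to_curved_deformations_general w C C' d e d' e' heC heC' he2 hde he2' hde' hnull
    φ₀ hφ₀deg hφ₀
end

section
/- Let R be a (not necessarily commutative) ring, let w be a central element of R, and let d, e, h ∈ R satisfy d² = 0, e² = 0, d·e + e·d = w, and d·h + h·d = 1. For ℓ ≥ 0 set H_ℓ := (−1)^ℓ · Σ_{j₁+j₂=ℓ} (h·e)^{j₁} · h · (h·e)^{j₂} ∈ R. Then for every ℓ ≥ 0: d·H_ℓ + H_ℓ·d = (−1)^ℓ · Σ_{j₁+j₂=ℓ} (e·h)^{j₁} · (h·e)^{j₂}. -/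
open Finset

section Aux
variable {R : Type*} [Ring R]

private lemma hepow_e (e h : R) (he2 : e * e = 0) (n : ℕ) :
    (h * e) ^ (n + 1) * e = 0 := by
  rw [pow_succ, mul_assoc, mul_assoc h e e, he2, mul_zero, mul_zero]

private lemma he_ehpow (e h : R) (he2 : e * e = 0) (n : ℕ) :
    (h * e) * (e * h) ^ (n + 1) = 0 := by
  rw [pow_succ', ← mul_assoc]
  have h0 : h * e * (e * h) = 0 := by
    rw [mul_assoc h e (e*h), ← mul_assoc e e h, he2, zero_mul, mul_zero]
  rw [h0, zero_mul]

private lemma e_hepow (e h : R) (n : ℕ) : e * (h * e) ^ n = (e * h) ^ n * e :=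
  SemiconjBy.pow_right (by simpa [SemiconjBy] using (mul_assoc e h e).symm) n

private lemma d_he (w d e h : R) (hw : ∀ x : R, w * x = x * w)
    (hde : d * e + e * d = w) (hdh : d * h + h * d = 1) :
    d * (h * e) = e - w * h + (h * e) * d := by
  have h1 : d * h = 1 - h * d := eq_sub_of_add_eq hdh
  have h2 : d * e = w - e * d := eq_sub_of_add_eq hde
  calc d * (h * e) = (d * h) * e := (mul_assoc d h e).symm
    _ = e - h * (d * e) := by rw [h1]; noncomm_ring
    _ = e - h * w + h * (e * d) := by rw [h2]; noncomm_ring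
    _ = e - w * h + (h * e) * d := by rw [← hw h]; noncomm_ring

private lemma d_hepow (w d e h : R) (hw : ∀ x : R, w * x = x * w)
    (hde : d * e + e * d = w) (hdh : d * h + h * d = 1) :
    ∀ n, d * (h * e) ^ n =
      (h * e) ^ n * d + ∑ i ∈ range n, (h * e) ^ i * (e - w * h) * (h * e) ^ (n - 1 - i) := by
  intro n
  induction n with
  | zero => simp
  | succ n IH =>
    have step : d * (h * e) ^ (n + 1)
        = (e - w * h) * (h * e) ^ n + (h * e) * (d * (h * e) ^ n) := by
      rw [pow_succ', ← mul_assoc, d_he w d e h hw hde hdh]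
      noncomm_ring
    rw [step, IH]
    have hs : ∑ i ∈ range (n + 1), (h * e) ^ i * (e - w * h) * (h * e) ^ (n + 1 - 1 - i)
        = (∑ i ∈ range n, (h * e) ^ (i+1) * (e - w * h) * (h * e) ^ (n - 1 - i))
          + (e - w * h) * (h * e) ^ n := by
      rw [Finset.sum_range_succ']
      congr 1
      · apply Finset.sum_congr rfl
        intro i _
        congr 2
        omega
      · simp
    rw [hs, mul_add, Finset.mul_sum]
    have hterm : ∀ i ∈ range n, (h * e) * ((h * e) ^ i * (e - w * h) * (h * e) ^ (n - 1 - i))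
        = (h * e) ^ (i + 1) * (e - w * h) * (h * e) ^ (n - 1 - i) := by
      intro i _
      rw [pow_succ']
      noncomm_ring
    rw [Finset.sum_congr rfl hterm, pow_succ']
    noncomm_ring

private lemma key (w d e h : R) (hw : ∀ x : R, w * x = x * w)
    (he2 : e * e = 0)
    (hde : d * e + e * d = w)
    (hdh : d * h + h * d = 1) :
    ∀ ℓ : ℕ,
      d * (∑ j ∈ range (ℓ + 1), (h * e) ^ j * h * (h * e) ^ (ℓ - j)) +
        (∑ j ∈ range (ℓ + 1), (h * e) ^ j * h * (h * e) ^ (ℓ - j)) * d =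
      ∑ j ∈ range (ℓ + 1), (e * h) ^ j * (h * e) ^ (ℓ - j) := by
  have hw' : ∀ x y : R, x * (w * y) = w * (x * y) := by
    intro x y; rw [← mul_assoc, ← hw x, mul_assoc]
  intro ℓ
  induction ℓ with
  | zero => simpa using hdh
  | succ ℓ IH =>
    set S : R := ∑ j ∈ range (ℓ + 1), (h * e) ^ j * h * (h * e) ^ (ℓ - j) with hSdef
    set T : R := ∑ j ∈ range (ℓ + 1), (e * h) ^ j * (h * e) ^ (ℓ - j) with hTdef
    set P : R := (h * e) ^ (ℓ + 1) with hPdef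
    have hS : (∑ j ∈ range (ℓ + 1 + 1), (h * e) ^ j * h * (h * e) ^ (ℓ + 1 - j))
        = (h * e) * S + h * P := by
      rw [Finset.sum_range_succ', hSdef, Finset.mul_sum]
      congr 1
      · apply Finset.sum_congr rfl
        intro j _
        rw [Nat.succ_sub_succ, pow_succ']
        noncomm_ring
      · simp [hPdef]
    have hT : (∑ j ∈ range (ℓ + 1 + 1), (e * h) ^ j * (h * e) ^ (ℓ + 1 - j))
        = (e * h) * T + P := by
      rw [Finset.sum_range_succ', hTdef, Finset.mul_sum]
      congr 1
      · apply Finset.sum_congr rfl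
        intro j _
        rw [Nat.succ_sub_succ, pow_succ']
        noncomm_ring
      · simp [hPdef]
    rw [hS, hT]
    -- e * S = (e*h) * T
    have heS : e * S = (e * h) * T := by
      rw [hSdef, hTdef, Finset.mul_sum, Finset.mul_sum]
      apply Finset.sum_congr rfl
      intro j _
      calc e * ((h * e) ^ j * h * (h * e) ^ (ℓ - j))
          = (e * (h * e) ^ j) * h * (h * e) ^ (ℓ - j) := by noncomm_ring
        _ = ((e * h) ^ j * (e * h)) * (h * e) ^ (ℓ - j) := by
              rw [e_hepow]; noncomm_ring
        _ = e * h * ((e * h) ^ j * (h * e) ^ (ℓ - j)) := by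
              rw [← pow_succ, pow_succ']; noncomm_ring
    -- (h*e) * T = P
    have hheT : (h * e) * T = P := by
      rw [hTdef, Finset.sum_range_succ', mul_add, Finset.mul_sum]
      have : ∀ j ∈ range ℓ,
          (h * e) * ((e * h) ^ (j + 1) * (h * e) ^ (ℓ - (j + 1))) = 0 := by
        intro j _
        rw [← mul_assoc, he_ehpow e h he2, zero_mul]
      rw [Finset.sum_congr rfl this, Finset.sum_const_zero, hPdef]
      simp [pow_succ']
    -- commutator of d with P
    have hDP := d_hepow w d e h hw hde hdh (ℓ + 1)
    rw [show ℓ + 1 - 1 = ℓ from rfl] at hDP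
    have hsum : h * (∑ i ∈ range (ℓ + 1), (h * e) ^ i * (e - w * h) * (h * e) ^ (ℓ - i))
        = P - w * (h * S) := by
      rw [Finset.mul_sum]
      have hterm : ∀ i ∈ range (ℓ + 1),
          h * ((h * e) ^ i * (e - w * h) * (h * e) ^ (ℓ - i))
          = (if i = 0 then P else 0) - w * (h * ((h * e) ^ i * h * (h * e) ^ (ℓ - i))) := by
        intro i _
        rcases i with _ | i
        · simp only [if_pos rfl, pow_zero, one_mul, Nat.sub_zero]
          rw [sub_mul, mul_sub, hPdef, pow_succ']
          rw [show h * (w * h * (h * e) ^ ℓ) = w * (h * (h * (h * e) ^ ℓ)) by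
            rw [mul_assoc w h ((h*e)^ℓ), hw' h (h * (h*e)^ℓ)]]
          noncomm_ring
          abel
        · simp only [if_neg (Nat.succ_ne_zero i), zero_sub]
          have z : (h * e) ^ (i + 1) * (e - w * h) = -(w * ((h * e) ^ (i + 1) * h)) := by
            rw [mul_sub, hepow_e e h he2 i, hw']
            noncomm_ring
          rw [z]
          rw [show h * (-(w * ((h * e) ^ (i + 1) * h)) * (h * e) ^ (ℓ - (i + 1)))
              = -(h * (w * ((h * e) ^ (i + 1) * h * (h * e) ^ (ℓ - (i + 1))))) by noncomm_ring]
          rw [hw' h]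
      rw [Finset.sum_congr rfl hterm, Finset.sum_sub_distrib]
      congr 1
      · simp
      · rw [← Finset.mul_sum, ← Finset.mul_sum, hSdef]
    -- E : anticommutator with h*P
    have E : d * (h * P) + (h * P) * d = w * (h * S) := by
      calc d * (h * P) + (h * P) * d = (d * h) * P + h * (P * d) := by noncomm_ring
        _ = (1 - h * d) * P + h * (P * d) := by rw [eq_sub_of_add_eq hdh]
        _ = P - h * (d * P) + h * (P * d) := by noncomm_ring
        _ = P - h * (P * d + ∑ i ∈ range (ℓ + 1),
              (h * e) ^ i * (e - w * h) * (h * e) ^ (ℓ - i)) + h * (P * d) := by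
              rw [← hDP]
        _ = P - h * (∑ i ∈ range (ℓ + 1),
              (h * e) ^ i * (e - w * h) * (h * e) ^ (ℓ - i)) := by noncomm_ring
        _ = P - (P - w * (h * S)) := by rw [hsum]
        _ = w * (h * S) := by noncomm_ring
    -- E2 : anticommutator with (h*e)*S
    have E2 : d * ((h * e) * S) + ((h * e) * S) * d = (e * h) * T - w * (h * S) + P := by
      calc d * ((h * e) * S) + ((h * e) * S) * d
          = (d * (h * e)) * S + (h * e) * (S * d) := by noncomm_ring
        _ = (e - w * h + (h * e) * d) * S + (h * e) * (S * d) := by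
              rw [d_he w d e h hw hde hdh]
        _ = e * S - w * (h * S) + (h * e) * (d * S + S * d) := by
              noncomm_ring
        _ = (e * h) * T - w * (h * S) + (h * e) * T := by rw [IH, heS]
        _ = (e * h) * T - w * (h * S) + P := by rw [hheT]
    calc d * ((h * e) * S + h * P) + ((h * e) * S + h * P) * d
        = (d * ((h * e) * S) + ((h * e) * S) * d) + (d * (h * P) + (h * P) * d) := by
          noncomm_ring
      _ = ((e * h) * T - w * (h * S) + P) + w * (h * S) := by rw [E2, E]
      _ = (e * h) * T + P := by noncomm_ring

end Aux

/-- The anticommutator of the differential `d` with the `u^ℓ`-coefficient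
`H_ℓ = (−1)^ℓ Σ_{j₁+j₂=ℓ} (he)^{j₁} h (he)^{j₂}` of the deformed null-homotopy equals
`(−1)^ℓ Σ_{j₁+j₂=ℓ} (eh)^{j₁} (he)^{j₂}`. -/
theorem anticommutator_d_H
    {R : Type*} [Ring R] (w d e h : R)
    (hw : ∀ x : R, w * x = x * w)
    (hd2 : d * d = 0) (he2 : e * e = 0)
    (hde : d * e + e * d = w)
    (hdh : d * h + h * d = 1) :
    ∀ ℓ : ℕ,
      d * ((-1 : R) ^ ℓ *
          ∑ j ∈ Finset.range (ℓ + 1), (h * e) ^ j * h * (h * e) ^ (ℓ - j)) +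
        ((-1 : R) ^ ℓ *
          ∑ j ∈ Finset.range (ℓ + 1), (h * e) ^ j * h * (h * e) ^ (ℓ - j)) * d =
      (-1 : R) ^ ℓ * ∑ j ∈ Finset.range (ℓ + 1), (e * h) ^ j * (h * e) ^ (ℓ - j) := by
  intro ℓ
  have K := key w d e h hw he2 hde hdh ℓ
  have c : d * (-1 : R) ^ ℓ = (-1 : R) ^ ℓ * d :=
    ((Commute.neg_one_left d).pow_left ℓ).eq.symm
  calc d * ((-1 : R) ^ ℓ * ∑ j ∈ Finset.range (ℓ + 1), (h * e) ^ j * h * (h * e) ^ (ℓ - j)) +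
        ((-1 : R) ^ ℓ * ∑ j ∈ Finset.range (ℓ + 1), (h * e) ^ j * h * (h * e) ^ (ℓ - j)) * d
      = (-1 : R) ^ ℓ * (d * (∑ j ∈ Finset.range (ℓ + 1), (h * e) ^ j * h * (h * e) ^ (ℓ - j)) +
          (∑ j ∈ Finset.range (ℓ + 1), (h * e) ^ j * h * (h * e) ^ (ℓ - j)) * d) := by
        rw [← mul_assoc d, c, mul_assoc, mul_assoc, ← mul_add]
    _ = (-1 : R) ^ ℓ * ∑ j ∈ Finset.range (ℓ + 1), (e * h) ^ j * (h * e) ^ (ℓ - j) := by rw [K]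
end

section
/- Let R be a (not necessarily commutative) ring, let w be a central element of R, and let d, e, h ∈ R satisfy d² = 0, e² = 0, d·e + e·d = w, and d·h + h·d = 1. Then for every ℓ ≥ 1: (h·e)^ℓ·d − d·(h·e)^ℓ = −e·(h·e)^{ℓ−1} + w · Σ_{j=0}^{ℓ−1} (h·e)^{ℓ−1−j} · h · (h·e)^{j}. -/
/-!
Commutation with `d` obeys the Leibniz rule: `[(he)^ℓ, d] = Σ_j (he)^(ℓ-1-j) [he, d] (he)^j`.
The anticommutation relations give `[he, d] = -e + wh`. Since `e² = 0`, every `(he)^k e` with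
`k ≥ 1` vanishes, so the `-e` part contributes only `-e (he)^(ℓ-1)`.
-/

open Finset

theorem pow_mul_sub_mul_pow_eq_sum {R : Type*} [Ring R] (a d : R) (n : ℕ) :
    a ^ n * d - d * a ^ n = ∑ j ∈ range n, a ^ (n - 1 - j) * (a * d - d * a) * a ^ j := by
  induction n with
  | zero => simp
  | succ n ih =>
    have split : a ^ (n + 1) * d - d * a ^ (n + 1) =
        a ^ n * (a * d - d * a) + (a ^ n * d - d * a ^ n) * a := by
      noncomm_ring
    rw [split, ih, sum_range_succ', sum_mul, add_comm]
    congr 1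
    · refine sum_congr rfl fun j _ => ?_
      rw [show n + 1 - 1 - (j + 1) = n - 1 - j by omega, pow_succ _ j, mul_assoc]
    · simp

section

variable {R : Type*} [Ring R] {w d e h : R}

theorem mul_sub_mul_eq_of_anticommutators (hw : ∀ x : R, w * x = x * w)
    (hde : d * e + e * d = w) (hdh : d * h + h * d = 1) :
    h * e * d - d * (h * e) = -e + w * h := by
  calc h * e * d - d * (h * e)
      = h * (d * e + e * d) - (d * h + h * d) * e := by noncomm_ring
    _ = h * w - e := by rw [hde, hdh, one_mul]
    _ = -e + w * h := by rw [hw h]; abel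

theorem pow_succ_mul_eq_zero_of_mul_self_eq_zero (he2 : e * e = 0) (k : ℕ) :
    (h * e) ^ (k + 1) * e = 0 := by
  rw [pow_succ, mul_assoc, mul_assoc, he2, mul_zero, mul_zero]

theorem sum_pow_mul_mul_pow_eq_of_mul_self_eq_zero (he2 : e * e = 0) (n : ℕ) :
    ∑ j ∈ range (n + 1), (h * e) ^ (n - j) * e * (h * e) ^ j = e * (h * e) ^ n := by
  rw [sum_eq_single_of_mem n (self_mem_range_succ n), Nat.sub_self, pow_zero, one_mul]
  intro j hj hjn
  obtain ⟨k, hk⟩ : ∃ k, n - j = k + 1 :=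
    ⟨n - j - 1, by rw [mem_range_succ_iff] at hj; omega⟩
  rw [hk, pow_succ_mul_eq_zero_of_mul_self_eq_zero he2, zero_mul]

end

theorem commutator_he_pow_d_general
    {R : Type*} [Ring R] (w d e h : R)
    (hw : ∀ x : R, w * x = x * w)
    (he2 : e * e = 0)
    (hde : d * e + e * d = w)
    (hdh : d * h + h * d = 1) :
    ∀ ℓ : ℕ, 1 ≤ ℓ →
      (h * e) ^ ℓ * d - d * (h * e) ^ ℓ =
        -(e * (h * e) ^ (ℓ - 1)) +
          w * ∑ j ∈ Finset.range ℓ, (h * e) ^ (ℓ - 1 - j) * h * (h * e) ^ j := by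
  rintro ℓ hℓ
  obtain ⟨n, rfl⟩ := Nat.exists_eq_add_of_le' hℓ
  rw [pow_mul_sub_mul_pow_eq_sum, mul_sub_mul_eq_of_anticommutators hw hde hdh,
    Nat.add_sub_cancel, ← sum_pow_mul_mul_pow_eq_of_mul_self_eq_zero (h := h) he2, mul_sum,
    ← sum_neg_distrib, ← sum_add_distrib]
  refine sum_congr rfl fun j _ => ?_
  rw [mul_add, add_mul, mul_neg, neg_mul, ← mul_assoc _ w h, ← hw, mul_assoc w, mul_assoc w]

/-- The commutator identity `(he)^ℓ d − d (he)^ℓ = −e(he)^{ℓ−1} + w Σ_{j<ℓ} (he)^{ℓ−1−j} h (he)^j`. -/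
theorem commutator_he_pow_d
    {R : Type*} [Ring R] (w d e h : R)
    (hw : ∀ x : R, w * x = x * w)
    (hd2 : d * d = 0) (he2 : e * e = 0)
    (hde : d * e + e * d = w)
    (hdh : d * h + h * d = 1) :
    ∀ ℓ : ℕ, 1 ≤ ℓ →
      (h * e) ^ ℓ * d - d * (h * e) ^ ℓ =
        -(e * (h * e) ^ (ℓ - 1)) +
          w * ∑ j ∈ Finset.range ℓ, (h * e) ^ (ℓ - 1 - j) * h * (h * e) ^ j :=
  commutator_he_pow_d_general w d e h hw he2 hde hdh
end

section
/- Let R be a (not necessarily commutative) ring, let w be a central element of R, and let d, e, h ∈ R satisfy d² = 0, e² = 0, d·e + e·d = w, and d·h + h·d = 1. Then for every ℓ ≥ 1: d·(h·e)^ℓ·h + (h·e)^ℓ·h·d = (e·h)^ℓ + (h·e)^ℓ − w · Σ_{j=0}^{ℓ−1} (h·e)^{ℓ−1−j} · h · (h·e)^{j} · h. -/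
/-!
The commutator `x ↦ d x - x d` is a derivation, and
`d (h e) - (h e) d = (d h + h d) e - h (d e + e d) = e - w h`. Expanding `d a^ℓ - a^ℓ d` for
`a = h e` by the Leibniz rule and using `d h + h d = 1` gives
`d a^ℓ h + a^ℓ h d = a^ℓ + ∑ a^(ℓ-1-j) e a^j h - w ∑ a^(ℓ-1-j) h a^j h`.
The middle sum is `∑ (h e)^(ℓ-1-j) (e h)^(j+1)`, and `e² = 0` kills every term but the last,
which is `(e h)^ℓ`.
-/

open Finset

theorem mul_pow_sub_pow_mul {R : Type*} [Ring R] (d a : R) (n : ℕ) :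
    d * a ^ n - a ^ n * d = ∑ j ∈ range n, a ^ (n - 1 - j) * (d * a - a * d) * a ^ j := by
  induction n with
  | zero => simp
  | succ n ih =>
    calc d * a ^ (n + 1) - a ^ (n + 1) * d
        = (d * a ^ n - a ^ n * d) * a + a ^ n * (d * a - a * d) := by
          rw [pow_succ]; noncomm_ring
      _ = _ := by
          rw [ih, sum_mul, sum_range_succ' _ n, Nat.add_sub_cancel, Nat.sub_zero, pow_zero,
            mul_one]
          congr 1
          refine sum_congr rfl fun j _ => ?_
          rw [show n - (j + 1) = n - 1 - j by omega, pow_succ, mul_assoc _ _ a]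

theorem mul_pow_mul_mul_eq_pow_succ {M : Type*} [Monoid M] (e h : M) (n : ℕ) :
    e * (h * e) ^ n * h = (e * h) ^ (n + 1) := by
  rw [← mul_pow_mul, pow_succ, mul_assoc]

theorem pow_mul_pow_eq_zero_of_mul_self_eq_zero {M₀ : Type*} [MonoidWithZero M₀] {e : M₀}
    (he : e * e = 0) (h : M₀) {k m : ℕ} (hk : k ≠ 0) (hm : m ≠ 0) : (h * e) ^ k * (e * h) ^ m = 0 := by
  obtain ⟨k, rfl⟩ := Nat.exists_eq_succ_of_ne_zero hk
  obtain ⟨m, rfl⟩ := Nat.exists_eq_succ_of_ne_zero hm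
  calc (h * e) ^ (k + 1) * (e * h) ^ (m + 1)
      = (h * e) ^ k * h * (e * e) * h * (e * h) ^ m := by
        rw [pow_succ, pow_succ']; simp only [mul_assoc]
    _ = 0 := by rw [he, mul_zero, zero_mul, zero_mul]

theorem sum_pow_mul_mul_pow_mul_eq_pow {R : Type*} [Semiring R] {e : R} (he : e * e = 0) (h : R)
    {n : ℕ} (hn : n ≠ 0) :
    ∑ j ∈ range n, (h * e) ^ (n - 1 - j) * e * (h * e) ^ j * h = (e * h) ^ n := by
  obtain ⟨m, rfl⟩ := Nat.exists_eq_succ_of_ne_zero hn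
  simp only [Nat.succ_sub_one, mul_assoc _ e, mul_assoc _ (e * _), mul_pow_mul_mul_eq_pow_succ]
  rw [sum_range_succ, Nat.sub_self, pow_zero, one_mul, sum_eq_zero, zero_add]
  exact fun j hj =>
    pow_mul_pow_eq_zero_of_mul_self_eq_zero he h (by simp at hj; omega) j.succ_ne_zero

theorem anticommutator_d_he_pow_h_general
    {R : Type*} [Ring R] (w d e h : R)
    (hw : ∀ x : R, w * x = x * w)
    (he2 : e * e = 0)
    (hde : d * e + e * d = w)
    (hdh : d * h + h * d = 1) :
    ∀ ℓ : ℕ, 1 ≤ ℓ →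
      d * ((h * e) ^ ℓ * h) + (h * e) ^ ℓ * h * d =
        (e * h) ^ ℓ + (h * e) ^ ℓ -
          w * ∑ j ∈ Finset.range ℓ, (h * e) ^ (ℓ - 1 - j) * h * (h * e) ^ j * h := by
  intro ℓ hℓ
  have hda : d * (h * e) - h * e * d = e - w * h := by
    linear_combination (norm := noncomm_ring) hdh * e - h * hde + hw h
  calc d * ((h * e) ^ ℓ * h) + (h * e) ^ ℓ * h * d
      = (d * (h * e) ^ ℓ - (h * e) ^ ℓ * d) * h + (h * e) ^ ℓ * (d * h + h * d) := by
        noncomm_ring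
    _ = (∑ j ∈ range ℓ, (h * e) ^ (ℓ - 1 - j) * e * (h * e) ^ j * h) + (h * e) ^ ℓ -
          w * ∑ j ∈ range ℓ, (h * e) ^ (ℓ - 1 - j) * h * (h * e) ^ j * h := by
        rw [mul_pow_sub_pow_mul, hda, hdh, mul_one, sum_mul, mul_sum, add_sub_right_comm,
          ← sum_sub_distrib]
        congr 1
        refine sum_congr rfl fun j _ => ?_
        rw [mul_sub, sub_mul, sub_mul, ← mul_assoc, ← hw]
        simp only [mul_assoc]
    _ = _ := by rw [sum_pow_mul_mul_pow_mul_eq_pow he2 h (by omega)]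

/-- The anticommutator identity
`d (he)^ℓ h + (he)^ℓ h d = (eh)^ℓ + (he)^ℓ − w Σ_{j<ℓ} (he)^{ℓ−1−j} h (he)^j h`. -/
theorem anticommutator_d_he_pow_h
    {R : Type*} [Ring R] (w d e h : R)
    (hw : ∀ x : R, w * x = x * w)
    (hd2 : d * d = 0) (he2 : e * e = 0)
    (hde : d * e + e * d = w)
    (hdh : d * h + h * d = 1) :
    ∀ ℓ : ℕ, 1 ≤ ℓ →
      d * ((h * e) ^ ℓ * h) + (h * e) ^ ℓ * h * d =
        (e * h) ^ ℓ + (h * e) ^ ℓ -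
          w * ∑ j ∈ Finset.range ℓ, (h * e) ^ (ℓ - 1 - j) * h * (h * e) ^ j * h :=
  anticommutator_d_he_pow_h_general w d e h hw he2 hde hdh
end

section
/- Let R be a (not necessarily commutative) ring and let d, e, d', e', a, b ∈ R and w a central element of R satisfy: d·e + e·d = w, d'·e' + e'·d' = w, e·e = 0, e'·e' = 0, and d'·a − a·d + e'·b − b·e = 0. Then, setting θ := e'·a − a·e, one has d'·θ + θ·d = 0. -/
/-!
Write `δ x = d'x ∓ xd` and `ε x = e'x ∓ xe` for the graded commutators with the differentials
and with the deformation terms (sign `-` on even `x`, `+` on odd `x`). Then `δε + εδ` is the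
commutator with `d'e' + e'd' = w = de + ed`, which vanishes since `w` is central, and `ε² = 0`
since `e² = e'² = 0`. Hence `δθ = δεa = -εδa = εεb = 0`, using the inductive relation `δa = -εb`.
-/

section GradedCommutator

variable {R : Type*} [Ring R]

theorem anticomm_comm_add_anticomm_comm (d e d' e' a : R) :
    d' * (e' * a - a * e) + (e' * a - a * e) * d + (e' * (d' * a - a * d) + (d' * a - a * d) * e) =
      (d' * e' + e' * d') * a - a * (d * e + e * d) := by
  noncomm_ring

theorem anticomm_comm_self (e e' b : R) :
    e' * (e' * b - b * e) + (e' * b - b * e) * e = e' * e' * b - b * (e * e) := by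
  noncomm_ring

end GradedCommutator

/-- In the inductive construction extending a chain map to curved deformations,
`θ = e'·a − a·e` anticommutes with the differentials: `d'·θ + θ·d = 0`. -/
theorem theta_is_chain_map
    {R : Type*} [Ring R] (d e d' e' a b w : R)
    (hw : ∀ x : R, w * x = x * w)
    (hde : d * e + e * d = w)
    (hde' : d' * e' + e' * d' = w)
    (he2 : e * e = 0) (he2' : e' * e' = 0)
    (hind : d' * a - a * d + e' * b - b * e = 0) :
    d' * (e' * a - a * e) + (e' * a - a * e) * d = 0 := by
  have hδa : d' * a - a * d = -(e' * b - b * e) :=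
    eq_neg_of_add_eq_zero_left (by rw [← hind]; abel)
  have hεδa : e' * (d' * a - a * d) + (d' * a - a * d) * e = 0 := by
    rw [hδa, mul_neg, neg_mul, ← neg_add, anticomm_comm_self, he2, he2', zero_mul, mul_zero,
      sub_zero, neg_zero]
  have key := anticomm_comm_add_anticomm_comm d e d' e' a
  rwa [hεδa, add_zero, hde', hde, hw a, sub_self] at key
end

section
/- Let k be a commutative ring and I an index set. Let a : I → I → ℤ be a symmetric function with a i i = 2 for all i and a i j ∈ {0, −1} for i ≠ j, and let v : I → I → kˣ be invertible scalars with (v i j)·(v j i) = 1 whenever a i j = −1. Define c : I → I → k by c j i = 2 if j = i, c j i = v j i if a i j = −1, and c j i = 0 if a i j = 0 with i ≠ j. Let M be the free k-module with basis (b_j)_{j∈I} and for each i ∈ I let σ_i : M → M be the k-linear map with σ_i(b_j) = b_j − (c j i)·b_i. Then for all i, j ∈ I with a i j = −1, one has σ_i ∘ σ_j ∘ σ_i = σ_j ∘ σ_i ∘ σ_j. -/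
/-!
Evaluate both sides on a basis vector `b_l`. Using only `c i i = 2` (so `σ_i b_i = -b_i`) and
`c i j * c j i = 1`, one finds
`σ_i σ_j σ_i b_l = b_l + (c l j * c j i - c l i) • b_i + (c l i * c i j - c l j) • b_j`,
an expression invariant under swapping `i` and `j`.
-/

/-- The linear map on the free module `I →₀ k` sending the basis vector `b_j` to
`b_j − (c j i) • b_i`. -/
noncomputable def bubbleReflection {k : Type*} [CommRing k] {I : Type*}
    (c : I → I → k) (i : I) : (I →₀ k) →ₗ[k] (I →₀ k) :=
  Finsupp.linearCombination k fun j => Finsupp.single j 1 - c j i • Finsupp.single i 1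

section

variable {k : Type*} [CommRing k] {I : Type*} {c : I → I → k}

theorem bubbleReflection_single (i l : I) :
    bubbleReflection c i (Finsupp.single l 1) =
      Finsupp.single l 1 - c l i • Finsupp.single i 1 := by
  simp [bubbleReflection]

theorem bubbleReflection_single_self {i : I} (hi : c i i = 2) :
    bubbleReflection c i (Finsupp.single i 1) = -Finsupp.single i 1 := by
  rw [bubbleReflection_single, hi]
  module

theorem bubbleReflection_conj_single {i j : I} (hi : c i i = 2) (hij : c i j * c j i = 1)
    (l : I) :
    bubbleReflection c i (bubbleReflection c j (bubbleReflection c i (Finsupp.single l 1))) =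
      Finsupp.single l 1 + (c l j * c j i - c l i) • Finsupp.single i 1 +
        (c l i * c i j - c l j) • Finsupp.single j 1 := by
  simp only [bubbleReflection_single, map_sub, map_smul, bubbleReflection_single_self hi]
  linear_combination (norm := module) hij • (-c l i • Finsupp.single i (1 : k))

end

theorem bubbleReflection_braid_general {k : Type*} [CommRing k] {I : Type*}
    (a : I → I → ℤ) (v : I → I → kˣ) (c : I → I → k)
    (ha_symm : ∀ i j, a i j = a j i)
    (hv : ∀ i j, a i j = -1 → (v i j : k) * (v j i : k) = 1)
    (hc_diag : ∀ i, c i i = 2)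
    (hc_edge : ∀ i j, a i j = -1 → c j i = (v j i : k)) :
    ∀ i j : I, a i j = -1 →
      (bubbleReflection c i) ∘ₗ (bubbleReflection c j) ∘ₗ (bubbleReflection c i) =
        (bubbleReflection c j) ∘ₗ (bubbleReflection c i) ∘ₗ (bubbleReflection c j) := by
  intro i j hij
  have hprod : c i j * c j i = 1 := by
    rw [hc_edge j i (ha_symm i j ▸ hij), hc_edge i j hij]
    exact hv i j hij
  refine Finsupp.basisSingleOne.ext fun l => ?_
  simp only [Finsupp.coe_basisSingleOne, LinearMap.comp_apply,
    bubbleReflection_conj_single (hc_diag i) hprod,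
    bubbleReflection_conj_single (hc_diag j) (mul_comm (c i j) (c j i) ▸ hprod)]
  abel

/-- For a simply-laced symmetric Cartan datum `a` and edge scalars `v` with
`v i j · v j i = 1` on edges, the reflections `σ_i(b_j) = b_j − (c j i)·b_i`
(where `c i i = 2`, `c j i = v j i` on edges and `c j i = 0` otherwise) satisfy the braid relation when `a i j = −1`. -/
theorem bubbleReflection_braid {k : Type*} [CommRing k] {I : Type*}
    (a : I → I → ℤ) (v : I → I → kˣ) (c : I → I → k)
    (ha_symm : ∀ i j, a i j = a j i)
    (ha_diag : ∀ i, a i i = 2)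
    (ha_off : ∀ i j, i ≠ j → a i j = 0 ∨ a i j = -1)
    (hv : ∀ i j, a i j = -1 → (v i j : k) * (v j i : k) = 1)
    (hc_diag : ∀ i, c i i = 2)
    (hc_edge : ∀ i j, a i j = -1 → c j i = (v j i : k))
    (hc_orth : ∀ i j, i ≠ j → a i j = 0 → c j i = 0) :
    ∀ i j : I, a i j = -1 →
      (bubbleReflection c i) ∘ₗ (bubbleReflection c j) ∘ₗ (bubbleReflection c i) =
        (bubbleReflection c j) ∘ₗ (bubbleReflection c i) ∘ₗ (bubbleReflection c j) :=
  bubbleReflection_braid_general a v c ha_symm hv hc_diag hc_edge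
end
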